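/- On ℝ³ with coordinates (x, y, z), let g be the Lorentzian metric g = dx dy + (dz − x dy)²; explicitly, g at the point with x-coordinate x sends vectors a, b ∈ ℝ³ to ½(a_x b_y + a_y b_x) + (a_z − x a_y)(b_z − x b_y). Then the real vector space of smooth conformal Killing fields of g on ℝ³ is finite-dimensional of dimension exactly 4; it is spanned by the Killing fields ∂_y, ∂_z, ∂_x + y ∂_z, and x ∂_x − y ∂_y. -/

import Mathlib

open scoped BigOperators

noncomputable section

/-- Points/vectors of `ℝⁿ`. -/
abbrev Vec (n : ℕ) := Fin n → ℝ

/-- Evaluation of a metric (given by its component functions `g p i j`) as a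
bilinear form at `p`. -/
def metricEval {n : ℕ} (g : Vec n → Fin n → Fin n → ℝ) (p : Vec n) (u v : Vec n) : ℝ :=
  ∑ i, ∑ j, u i * g p i j * v j

/-- The Lie derivative equation `L_X g = f · g` holds at every point of `U`:
`(D_p g)(X(p))(u,v) + g(p)(D_p X(u), v) + g(p)(u, D_p X(v)) = f(p) · g(p)(u,v)`. -/
def LieDerivEq {n : ℕ} (U : Set (Vec n)) (g : Vec n → Fin n → Fin n → ℝ)
    (X : Vec n → Vec n) (f : Vec n → ℝ) : Prop :=
  ∀ p ∈ U, ∀ u v : Vec n,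
    (∑ i, ∑ j, u i * fderiv ℝ (fun q => g q i j) p (X p) * v j)
      + metricEval g p (fderiv ℝ X p u) v + metricEval g p u (fderiv ℝ X p v)
      = f p * metricEval g p u v

/-- A smooth conformal Killing field of `g` on `U`. -/
def IsConformalKillingOn {n : ℕ} (U : Set (Vec n)) (g : Vec n → Fin n → Fin n → ℝ)
    (X : Vec n → Vec n) : Prop :=
  ContDiffOn ℝ (⊤ : ℕ∞) X U ∧ ∃ f : Vec n → ℝ, LieDerivEq U g X f

/-- A smooth Killing field of `g` on `U` (`L_X g = 0`). -/
def IsKillingOn {n : ℕ} (U : Set (Vec n)) (g : Vec n → Fin n → Fin n → ℝ)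
    (X : Vec n → Vec n) : Prop :=
  ContDiffOn ℝ (⊤ : ℕ∞) X U ∧ LieDerivEq U g X fun _ => 0

/-- A smooth homothety of `g` on `U` (`L_X g = c · g` with `c` a nonzero constant). -/
def IsHomothetyOn {n : ℕ} (U : Set (Vec n)) (g : Vec n → Fin n → Fin n → ℝ)
    (X : Vec n → Vec n) : Prop :=
  ContDiffOn ℝ (⊤ : ℕ∞) X U ∧ ∃ c : ℝ, c ≠ 0 ∧ LieDerivEq U g X fun _ => c

/-- The bilinear form of the Lorentzian metric `dx dy + (dz − x dy)²`
on `ℝ³` with coordinates `(x, y, z)` (indices `0,1,2`). -/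
def lor3Form (x a b : Vec 3) : ℝ :=
  (1 / 2) * (a 0 * b 1 + a 1 * b 0) + (a 2 - x 0 * a 1) * (b 2 - x 0 * b 1)

/-- Components of the metric `dx dy + (dz − x dy)²`. -/
def lor3Metric (x : Vec 3) (i j : Fin 3) : ℝ := lor3Form x (Pi.single i 1) (Pi.single j 1)

/-- `∂_y`. -/
def lor3X1 : Vec 3 → Vec 3 := fun _ => ![0, 1, 0]
/-- `∂_z`. -/
def lor3X2 : Vec 3 → Vec 3 := fun _ => ![0, 0, 1]
/-- `∂_x + y ∂_z`. -/
def lor3X3 : Vec 3 → Vec 3 := fun x => ![1, 0, x 1]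
/-- `x ∂_x − y ∂_y`. -/
def lor3X4 : Vec 3 → Vec 3 := fun x => ![x 0, -x 1, 0]

/-- The four fields. -/
def lor3Basis : Fin 4 → (Vec 3 → Vec 3) := ![lor3X1, lor3X2, lor3X3, lor3X4]

/-!
The four fields are Killing by direct computation. Conversely, write a conformal Killing field
as `Y = A ∂_x + B ∂_y + C ∂_z`. Since `g_zz = 1`, the conformal factor is `(L_Y g)_zz`, and
eliminating it leaves a linear PDE system for `A, B, C`. Its `xx`-component says that `B` does
not depend on `x`; differentiating the `yy`-component three times in `x`, and substituting the
`xy`- and `xz`-components along the way, gives `B_z = 0`. From there the system collapses to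
`C_z = C_x = 0`, `A_x = -B_y`, `A_y = A_z = 0` and `B_yy = C_yy = 0`, so
`A = γ - β x`, `B = b₀ + β y`, `C = c₀ + γ y`, i.e.
`Y = b₀ ∂_y + c₀ ∂_z + γ (∂_x + y ∂_z) - β (x ∂_x - y ∂_y)`.
-/

open scoped ContDiff

def partialDeriv {n : ℕ} (i : Fin n) (f : Vec n → ℝ) : Vec n → ℝ :=
  fun p => fderiv ℝ f p (Pi.single i 1)

local notation "∂[" i "]" => partialDeriv i

section PartialDeriv

variable {n : ℕ}

@[fun_prop]
theorem ContDiff.partialDeriv {f : Vec n → ℝ} (hf : ContDiff ℝ ∞ f) (i : Fin n) :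
    ContDiff ℝ ∞ (∂[i] f) :=
  (hf.fderiv_right (by simp)).clm_apply contDiff_const

theorem partialDeriv_comm {f : Vec n → ℝ} (hf : ContDiff ℝ 2 f) (i j : Fin n) :
    ∂[i] (∂[j] f) = ∂[j] (∂[i] f) := by
  ext p
  have hdf : DifferentiableAt ℝ (fderiv ℝ f) p :=
    (hf.fderiv_right (by norm_num)).differentiable one_ne_zero p
  have h2 : ∀ k l,
      ∂[k] (∂[l] f) p = fderiv ℝ (fderiv ℝ f) p (Pi.single k 1) (Pi.single l 1) := by
    intro k l
    show fderiv ℝ (fun q => fderiv ℝ f q (Pi.single l 1)) p _ = _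
    rw [fderiv_clm_apply hdf (differentiableAt_const _)]
    simp
  rw [h2, h2, (hf.contDiffAt.isSymmSndFDerivAt (by simp)).eq]

theorem partialDeriv_add {f g : Vec n → ℝ} (hf : Differentiable ℝ f) (hg : Differentiable ℝ g)
    (i : Fin n) : ∂[i] (fun q => f q + g q) = fun p => ∂[i] f p + ∂[i] g p := by
  ext p; simp [partialDeriv, fderiv_fun_add (hf p) (hg p)]

theorem partialDeriv_sub {f g : Vec n → ℝ} (hf : Differentiable ℝ f) (hg : Differentiable ℝ g)
    (i : Fin n) : ∂[i] (fun q => f q - g q) = fun p => ∂[i] f p - ∂[i] g p := by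
  ext p; simp [partialDeriv, fderiv_fun_sub (hf p) (hg p)]

theorem partialDeriv_neg (f : Vec n → ℝ) (i : Fin n) :
    ∂[i] (fun q => -f q) = fun p => -∂[i] f p := by
  ext p; simp [partialDeriv]

theorem partialDeriv_mul {f g : Vec n → ℝ} (hf : Differentiable ℝ f) (hg : Differentiable ℝ g)
    (i : Fin n) : ∂[i] (fun q => f q * g q) = fun p => f p * ∂[i] g p + ∂[i] f p * g p := by
  ext p; simp [partialDeriv, fderiv_fun_mul (hf p) (hg p), mul_comm]

theorem partialDeriv_pow {f : Vec n → ℝ} (hf : Differentiable ℝ f) (k : ℕ) (i : Fin n) :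
    ∂[i] (fun q => f q ^ k) = fun p => k * f p ^ (k - 1) * ∂[i] f p := by
  ext p; simp [partialDeriv, fderiv_fun_pow k (hf p)]

theorem partialDeriv_const (c : ℝ) (i : Fin n) : ∂[i] (fun _ => c) = fun _ => 0 := by
  ext p; simp [partialDeriv]

theorem partialDeriv_apply (i j : Fin n) :
    ∂[i] (fun q => q j) = fun _ => (Pi.single i 1 : Vec n) j := by
  ext p; simp [partialDeriv, (hasFDerivAt_apply j p).fderiv]

theorem partialDeriv_eq_zero_of_forall_eq_zero {f : Vec n → ℝ} (hf : ∀ p, f p = 0) (i : Fin n)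
    (p : Vec n) : ∂[i] f p = 0 := by
  simp [funext hf, partialDeriv_const]

theorem eq_of_partialDeriv_eq_zero {f : Vec n → ℝ} (hf : Differentiable ℝ f)
    (h : ∀ i p, ∂[i] f p = 0) (p q : Vec n) : f p = f q := by
  refine is_const_of_fderiv_eq_zero hf (fun x => ?_) p q
  apply ContinuousLinearMap.coe_injective
  refine LinearMap.pi_ext fun i c => ?_
  have hc : (Pi.single i c : Vec n) = c • Pi.single i 1 := by
    rw [← Pi.single_smul', smul_eq_mul, mul_one]
  simp [hc, show fderiv ℝ f x (Pi.single i 1) = 0 from h i x]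

theorem partialDeriv_partialDeriv_eq_zero {f : Vec n → ℝ} (hf : ContDiff ℝ 2 f) {k : Fin n}
    (h : ∀ p, ∂[k] f p = 0) (i : Fin n) (p : Vec n) : ∂[k] (∂[i] f) p = 0 := by
  rw [partialDeriv_comm hf]
  exact partialDeriv_eq_zero_of_forall_eq_zero h i p

theorem eq_add_sum_of_partialDeriv_eq {f : Vec n → ℝ} (hf : Differentiable ℝ f) (c : Fin n → ℝ)
    (h : ∀ i p, ∂[i] f p = c i) (p : Vec n) : f p = f 0 + ∑ i, c i * p i := by
  let ℓ : Vec n →L[ℝ] ℝ := ∑ j, c j • ContinuousLinearMap.proj j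
  have hℓ : ∀ q, ℓ q = ∑ j, c j * q j := by simp [ℓ]
  have hℓ' : ∀ i q, ∂[i] ℓ q = c i := by simp [partialDeriv, ℓ, Pi.single_apply]
  have key := eq_of_partialDeriv_eq_zero (f := fun q => f q - ℓ q) (hf.sub ℓ.differentiable)
    (fun i q => by simp [partialDeriv_sub hf ℓ.differentiable, h, hℓ']) p 0
  simp only [hℓ, Pi.zero_apply, mul_zero, Finset.sum_const_zero, sub_zero] at key
  linarith

theorem fderiv_apply_apply {m : ℕ} {X : Vec n → Vec m} {p : Vec n}
    (hX : DifferentiableAt ℝ X p) (u : Vec n) (k : Fin m) :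
    fderiv ℝ X p u k = fderiv ℝ (fun q => X q k) p u := by
  rw [fderiv_apply hX]
  rfl

end PartialDeriv

theorem fderiv_metricEval {n : ℕ} {g : Vec n → Fin n → Fin n → ℝ} {p : Vec n}
    (hg : ∀ i j, DifferentiableAt ℝ (fun q => g q i j) p) (u v w : Vec n) :
    fderiv ℝ (fun q => metricEval g q u v) p w =
      ∑ i, ∑ j, u i * fderiv ℝ (fun q => g q i j) p w * v j := by
  unfold metricEval
  rw [fderiv_fun_sum fun i _ => by fun_prop]
  simp only [FunLike.coe_sum, Finset.sum_apply]
  refine Finset.sum_congr rfl fun i _ => ?_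
  rw [fderiv_fun_sum fun j _ => by fun_prop]
  simp only [FunLike.coe_sum, Finset.sum_apply]
  refine Finset.sum_congr rfl fun j _ => ?_
  simp [fderiv_mul_const, fderiv_const_mul, hg]
  ring

theorem metricEval_lor3Metric (p u v : Vec 3) : metricEval lor3Metric p u v = lor3Form p u v := by
  simp [metricEval, lor3Metric, lor3Form, Fin.sum_univ_three, Pi.single_apply]
  ring

theorem fderiv_lor3Form (p u v w : Vec 3) :
    fderiv ℝ (fun q => lor3Form q u v) p w =
      -w 0 * (u 1 * (v 2 - p 0 * v 1) + v 1 * (u 2 - p 0 * u 1)) := by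
  have hx := hasFDerivAt_apply (𝕜 := ℝ) (0 : Fin 3) p
  have h := (((hx.mul_const (u 1)).const_sub (u 2)).fun_mul
    ((hx.mul_const (v 1)).const_sub (v 2))).const_add ((1 / 2) * (u 0 * v 1 + u 1 * v 0))
  unfold lor3Form
  rw [h.fderiv]
  simp
  ring

theorem lieDerivEq_lor3Metric_iff {U : Set (Vec 3)} {X : Vec 3 → Vec 3} {f : Vec 3 → ℝ} :
    LieDerivEq U lor3Metric X f ↔ ∀ p ∈ U, ∀ u v : Vec 3,
      -X p 0 * (u 1 * (v 2 - p 0 * v 1) + v 1 * (u 2 - p 0 * u 1))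
        + lor3Form p (fderiv ℝ X p u) v + lor3Form p u (fderiv ℝ X p v)
        = f p * lor3Form p u v := by
  have hg : ∀ p i j, DifferentiableAt ℝ (fun q => lor3Metric q i j) p := by
    intro p i j
    unfold lor3Metric lor3Form
    fun_prop
  simp only [LieDerivEq, ← fderiv_metricEval (hg _), metricEval_lor3Metric, fderiv_lor3Form]

theorem isKillingOn_lor3X1 : IsKillingOn Set.univ lor3Metric lor3X1 :=
  ⟨contDiffOn_const, lieDerivEq_lor3Metric_iff.2 fun p _ u v => by
    unfold lor3X1; simp [lor3Form]⟩

theorem isKillingOn_lor3X2 : IsKillingOn Set.univ lor3Metric lor3X2 :=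
  ⟨contDiffOn_const, lieDerivEq_lor3Metric_iff.2 fun p _ u v => by
    unfold lor3X2; simp [lor3Form]⟩

theorem isKillingOn_lor3X3 : IsKillingOn Set.univ lor3Metric lor3X3 := by
  have hX : ContDiff ℝ ∞ lor3X3 :=
    contDiff_pi.2 fun k => by fin_cases k <;> simp [lor3X3] <;> fun_prop
  refine ⟨hX.contDiffOn, lieDerivEq_lor3Metric_iff.2 fun p _ u v => ?_⟩
  simp [lor3Form, fderiv_apply_apply ((hX.differentiable (by simp)) p), lor3X3,
    (hasFDerivAt_apply _ p).fderiv]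
  ring

theorem isKillingOn_lor3X4 : IsKillingOn Set.univ lor3Metric lor3X4 := by
  have hX : ContDiff ℝ ∞ lor3X4 :=
    contDiff_pi.2 fun k => by fin_cases k <;> simp [lor3X4] <;> fun_prop
  refine ⟨hX.contDiffOn, lieDerivEq_lor3Metric_iff.2 fun p _ u v => ?_⟩
  simp [lor3Form, fderiv_apply_apply ((hX.differentiable (by simp)) p), lor3X4,
    (hasFDerivAt_apply _ p).fderiv]
  ring

theorem linearIndependent_lor3Basis : LinearIndependent ℝ lor3Basis := by
  rw [Fintype.linearIndependent_iff]
  intro c hc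
  have h0 := congrFun (congrFun hc 0)
  have h1 := congrFun (congrFun hc (Pi.single 0 1))
  have e0 := h0 0; have e1 := h0 1; have e2 := h0 2; have e3 := h1 0
  simp [Fin.sum_univ_four, lor3Basis, lor3X1, lor3X2, lor3X3, lor3X4] at e0 e1 e2 e3
  intro i
  fin_cases i <;> simp_all

/-- The conformal Killing equations of `lor3Metric` for `A ∂_x + B ∂_y + C ∂_z`, with the
conformal factor `(L_Y g)_zz` eliminated: `eq_ij` is the `ij`-component minus `g_ij` times the
`zz`-component, simplified by the preceding fields. -/
structure IsLor3ConformalKillingSystem (A B C : Vec 3 → ℝ) : Prop where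
  contDiff_A : ContDiff ℝ ∞ A
  contDiff_B : ContDiff ℝ ∞ B
  contDiff_C : ContDiff ℝ ∞ C
  eq_xx : ∀ p, ∂[0] B p = 0
  eq_xz : ∀ p, ∂[0] C p = -(1 / 2) * ∂[2] B p
  eq_xy : ∀ p, ∂[0] A p = -3 * p 0 * ∂[2] B p - ∂[1] B p + 2 * ∂[2] C p
  eq_yy : ∀ p, 2 * p 0 * A p + ∂[1] A p + 2 * p 0 ^ 2 * ∂[1] B p - 2 * p 0 * ∂[1] C p
    + 2 * p 0 ^ 3 * ∂[2] B p - 2 * p 0 ^ 2 * ∂[2] C p = 0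
  eq_yz : ∀ p, -A p - p 0 * ∂[1] B p + ∂[1] C p + (1 / 2) * ∂[2] A p - p 0 ^ 2 * ∂[2] B p
    + p 0 * ∂[2] C p = 0

theorem IsConformalKillingOn.isLor3ConformalKillingSystem {Y : Vec 3 → Vec 3}
    (hY : IsConformalKillingOn Set.univ lor3Metric Y) :
    IsLor3ConformalKillingSystem (Y · 0) (Y · 1) (Y · 2) := by
  obtain ⟨hYs, f, hL⟩ := hY
  have hY : ContDiff ℝ ∞ Y := contDiffOn_univ.1 hYs
  have hD : ∀ p u k, fderiv ℝ Y p u k = fderiv ℝ (fun q => Y q k) p u :=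
    fun p => fderiv_apply_apply ((hY.differentiable (by simp)) p)
  have comp : ∀ p (i j : Fin 3), _ := fun p i j =>
    lieDerivEq_lor3Metric_iff.1 hL p trivial (Pi.single i 1) (Pi.single j 1)
  refine ⟨contDiff_pi.1 hY 0, contDiff_pi.1 hY 1, contDiff_pi.1 hY 2, fun p => ?_, fun p => ?_,
    fun p => ?_, fun p => ?_, fun p => ?_⟩
  all_goals
    have h00 := comp p 0 0; have h01 := comp p 0 1; have h02 := comp p 0 2
    have h11 := comp p 1 1; have h12 := comp p 1 2; have h22 := comp p 2 2
    simp [lor3Form, hD] at h00 h01 h02 h11 h12 h22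
    unfold partialDeriv
  · linear_combination h00
  · linear_combination h02 + p 0 * h00
  · linear_combination 2 * h01 - h22 + 2 * p 0 * h02
  · linear_combination h11 - p 0 ^ 2 * h22
  · linear_combination h12 + p 0 * h22

namespace IsLor3ConformalKillingSystem

variable {A B C : Vec 3 → ℝ}

theorem B_xi_eq_zero (h : IsLor3ConformalKillingSystem A B C) (i : Fin 3) (p : Vec 3) :
    ∂[0] (∂[i] B) p = 0 :=
  partialDeriv_partialDeriv_eq_zero (h.contDiff_B.of_le ENat.LEInfty.out) h.eq_xx i p

theorem B_xij_eq_zero (h : IsLor3ConformalKillingSystem A B C) (i j : Fin 3) (p : Vec 3) :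
    ∂[0] (∂[i] (∂[j] B)) p = 0 :=
  partialDeriv_partialDeriv_eq_zero ((h.contDiff_B.partialDeriv j).of_le ENat.LEInfty.out)
    (h.B_xi_eq_zero j) i p

theorem C_xi_eq (h : IsLor3ConformalKillingSystem A B C) (i : Fin 3) (p : Vec 3) :
    ∂[0] (∂[i] C) p = -(1 / 2) * ∂[i] (∂[2] B) p := by
  have hB := h.contDiff_B
  rw [partialDeriv_comm (h.contDiff_C.of_le ENat.LEInfty.out), funext h.eq_xz]
  simp (disch := fun_prop (disch := simp)) only [partialDeriv_mul, partialDeriv_const]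
  ring

theorem A_xx_eq (h : IsLor3ConformalKillingSystem A B C) (p : Vec 3) :
    ∂[0] (∂[0] A) p = -3 * ∂[2] B p - ∂[2] (∂[2] B) p := by
  have hB := h.contDiff_B; have hC := h.contDiff_C
  rw [funext h.eq_xy]
  simp (disch := fun_prop (disch := simp)) only [partialDeriv_add, partialDeriv_sub,
    partialDeriv_mul, partialDeriv_const, partialDeriv_apply, h.B_xi_eq_zero, h.C_xi_eq]
  simp
  ring

theorem A_xxy_eq (h : IsLor3ConformalKillingSystem A B C) (p : Vec 3) :
    ∂[0] (∂[0] (∂[1] A)) p = -3 * ∂[1] (∂[2] B) p - ∂[1] (∂[2] (∂[2] B)) p := by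
  have hA := h.contDiff_A; have hB := h.contDiff_B
  rw [partialDeriv_comm (h.contDiff_A.of_le ENat.LEInfty.out) 0 1,
    partialDeriv_comm ((h.contDiff_A.partialDeriv 0).of_le ENat.LEInfty.out),
    funext h.A_xx_eq]
  simp (disch := fun_prop (disch := simp)) only [partialDeriv_sub, partialDeriv_mul,
    partialDeriv_const]
  ring

theorem eq_yy_x (h : IsLor3ConformalKillingSystem A B C) (p : Vec 3) :
    2 * A p + 2 * p 0 * ∂[0] A p + ∂[0] (∂[1] A) p + 4 * p 0 * ∂[1] B p - 2 * ∂[1] C p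
      + p 0 * ∂[1] (∂[2] B) p + 6 * p 0 ^ 2 * ∂[2] B p - 4 * p 0 * ∂[2] C p
      + p 0 ^ 2 * ∂[2] (∂[2] B) p = 0 := by
  have hA := h.contDiff_A; have hB := h.contDiff_B; have hC := h.contDiff_C
  have hx := partialDeriv_eq_zero_of_forall_eq_zero h.eq_yy 0 p
  simp (disch := fun_prop (disch := simp)) only [partialDeriv_add, partialDeriv_sub,
    partialDeriv_mul, partialDeriv_pow, partialDeriv_const, partialDeriv_apply,
    h.B_xi_eq_zero, h.C_xi_eq] at hx
  simp at hx
  linear_combination hx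

theorem eq_yy_xx (h : IsLor3ConformalKillingSystem A B C) (p : Vec 3) :
    -6 * p 0 * ∂[2] B p + 4 * ∂[2] C p + 2 * p 0 * ∂[2] (∂[2] B) p - ∂[1] (∂[2] B) p
      - ∂[1] (∂[2] (∂[2] B)) p = 0 := by
  have hA := h.contDiff_A; have hB := h.contDiff_B; have hC := h.contDiff_C
  have hx := partialDeriv_eq_zero_of_forall_eq_zero h.eq_yy_x 0 p
  simp (disch := fun_prop (disch := simp)) only [partialDeriv_add, partialDeriv_sub,
    partialDeriv_mul, partialDeriv_pow, partialDeriv_const, partialDeriv_apply,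
    h.B_xi_eq_zero, h.B_xij_eq_zero, h.C_xi_eq, h.A_xxy_eq, funext h.eq_xy] at hx
  simp at hx
  linear_combination hx

theorem B_z_eq_zero (h : IsLor3ConformalKillingSystem A B C) (p : Vec 3) : ∂[2] B p = 0 := by
  have hB := h.contDiff_B; have hC := h.contDiff_C
  have hx := partialDeriv_eq_zero_of_forall_eq_zero h.eq_yy_xx 0 p
  simp (disch := fun_prop (disch := simp)) only [partialDeriv_add, partialDeriv_sub,
    partialDeriv_mul, partialDeriv_const, partialDeriv_apply,
    h.B_xi_eq_zero, h.B_xij_eq_zero, h.C_xi_eq] at hx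
  have hB_xyzz : ∂[0] (∂[1] (∂[2] (∂[2] B))) p = 0 :=
    partialDeriv_partialDeriv_eq_zero (((hB.partialDeriv 2).partialDeriv 2).of_le ENat.LEInfty.out)
      (h.B_xij_eq_zero 2 2) 1 p
  simp [hB_xyzz] at hx
  linarith

theorem C_z_eq_zero (h : IsLor3ConformalKillingSystem A B C) (p : Vec 3) : ∂[2] C p = 0 := by
  have hB := partialDeriv_eq_zero_of_forall_eq_zero h.B_z_eq_zero
  have := h.eq_yy_xx p
  simp only [h.B_z_eq_zero, hB, partialDeriv_eq_zero_of_forall_eq_zero (hB 2)] at this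
  linarith

theorem C_x_eq_zero (h : IsLor3ConformalKillingSystem A B C) (p : Vec 3) : ∂[0] C p = 0 := by
  rw [h.eq_xz, h.B_z_eq_zero, mul_zero]

theorem A_x_eq (h : IsLor3ConformalKillingSystem A B C) (p : Vec 3) : ∂[0] A p = -∂[1] B p := by
  rw [h.eq_xy, h.B_z_eq_zero, h.C_z_eq_zero]
  ring

theorem B_zi_eq_zero (h : IsLor3ConformalKillingSystem A B C) (i : Fin 3) (p : Vec 3) :
    ∂[2] (∂[i] B) p = 0 :=
  partialDeriv_partialDeriv_eq_zero (h.contDiff_B.of_le ENat.LEInfty.out) h.B_z_eq_zero i p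

theorem C_zi_eq_zero (h : IsLor3ConformalKillingSystem A B C) (i : Fin 3) (p : Vec 3) :
    ∂[2] (∂[i] C) p = 0 :=
  partialDeriv_partialDeriv_eq_zero (h.contDiff_C.of_le ENat.LEInfty.out) h.C_z_eq_zero i p

theorem A_xz_eq_zero (h : IsLor3ConformalKillingSystem A B C) (p : Vec 3) :
    ∂[0] (∂[2] A) p = 0 := by
  rw [partialDeriv_comm (h.contDiff_A.of_le ENat.LEInfty.out), funext h.A_x_eq, partialDeriv_neg]
  exact neg_eq_zero.2 (h.B_zi_eq_zero 1 p)

theorem A_xyz_eq_zero (h : IsLor3ConformalKillingSystem A B C) (p : Vec 3) :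
    ∂[0] (∂[2] (∂[1] A)) p = 0 := by
  rw [partialDeriv_comm ((h.contDiff_A.partialDeriv 1).of_le ENat.LEInfty.out) 0 2,
    partialDeriv_comm (h.contDiff_A.of_le ENat.LEInfty.out) 0 1, funext h.A_x_eq,
    partialDeriv_neg, partialDeriv_neg, neg_eq_zero]
  exact partialDeriv_partialDeriv_eq_zero ((h.contDiff_B.partialDeriv 1).of_le ENat.LEInfty.out)
    (h.B_zi_eq_zero 1) 1 p

theorem A_z_eq_zero (h : IsLor3ConformalKillingSystem A B C) (p : Vec 3) : ∂[2] A p = 0 := by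
  have hA := h.contDiff_A; have hB := h.contDiff_B; have hC := h.contDiff_C
  have hz : ∀ q, 2 * q 0 * ∂[2] A q + ∂[2] (∂[1] A) q = 0 := fun q => by
    have hz := partialDeriv_eq_zero_of_forall_eq_zero h.eq_yy 2 q
    simp (disch := fun_prop (disch := simp)) only [partialDeriv_add, partialDeriv_sub,
      partialDeriv_mul, partialDeriv_pow, partialDeriv_const, partialDeriv_apply,
      h.B_z_eq_zero, h.C_z_eq_zero, h.B_zi_eq_zero, h.C_zi_eq_zero] at hz
    simpa using hz
  have hx := partialDeriv_eq_zero_of_forall_eq_zero hz 0 p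
  simp (disch := fun_prop (disch := simp)) only [partialDeriv_add, partialDeriv_mul,
    partialDeriv_const, partialDeriv_apply, h.A_xz_eq_zero, h.A_xyz_eq_zero] at hx
  simpa using hx

theorem eq_yz_reduced (h : IsLor3ConformalKillingSystem A B C) (p : Vec 3) :
    -A p - p 0 * ∂[1] B p + ∂[1] C p = 0 := by
  simpa [h.A_z_eq_zero, h.B_z_eq_zero, h.C_z_eq_zero] using h.eq_yz p

theorem A_y_eq_zero (h : IsLor3ConformalKillingSystem A B C) (p : Vec 3) : ∂[1] A p = 0 := by
  have := h.eq_yy p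
  rw [h.B_z_eq_zero, h.C_z_eq_zero] at this
  linear_combination this + 2 * p 0 * h.eq_yz_reduced p

theorem B_yy_eq_zero (h : IsLor3ConformalKillingSystem A B C) (p : Vec 3) :
    ∂[1] (∂[1] B) p = 0 := by
  have hxy :=
    partialDeriv_partialDeriv_eq_zero (h.contDiff_A.of_le ENat.LEInfty.out) h.A_y_eq_zero 0 p
  rw [funext h.A_x_eq, partialDeriv_neg] at hxy
  exact neg_eq_zero.1 hxy

theorem C_yy_eq_zero (h : IsLor3ConformalKillingSystem A B C) (p : Vec 3) :
    ∂[1] (∂[1] C) p = 0 := by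
  have hA := h.contDiff_A; have hB := h.contDiff_B; have hC := h.contDiff_C
  have hy := partialDeriv_eq_zero_of_forall_eq_zero h.eq_yz_reduced 1 p
  simp (disch := fun_prop (disch := simp)) only [partialDeriv_add, partialDeriv_sub,
    partialDeriv_neg, partialDeriv_mul, partialDeriv_apply, h.A_y_eq_zero, h.B_yy_eq_zero] at hy
  simpa using hy

theorem exists_eq_affine (h : IsLor3ConformalKillingSystem A B C) :
    ∃ β γ b₀ c₀ : ℝ, ∀ p : Vec 3,
      A p = γ - β * p 0 ∧ B p = b₀ + β * p 1 ∧ C p = c₀ + γ * p 1 := by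
  have hC2 : ContDiff ℝ 2 C := h.contDiff_C.of_le ENat.LEInfty.out
  have hB_y : ∀ p, ∂[1] B p = ∂[1] B 0 := fun p =>
    eq_of_partialDeriv_eq_zero ((h.contDiff_B.partialDeriv 1).differentiable (by simp))
      (fun i q => match i with
        | 0 => h.B_xi_eq_zero 1 q
        | 1 => h.B_yy_eq_zero q
        | 2 => h.B_zi_eq_zero 1 q) p 0
  have hC_y : ∀ p, ∂[1] C p = ∂[1] C 0 := fun p =>
    eq_of_partialDeriv_eq_zero ((h.contDiff_C.partialDeriv 1).differentiable (by simp))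
      (fun i q => match i with
        | 0 => partialDeriv_partialDeriv_eq_zero hC2 h.C_x_eq_zero 1 q
        | 1 => h.C_yy_eq_zero q
        | 2 => h.C_zi_eq_zero 1 q) p 0
  refine ⟨∂[1] B 0, ∂[1] C 0, B 0, C 0, fun p => ⟨?_, ?_, ?_⟩⟩
  · have hA := eq_add_sum_of_partialDeriv_eq (h.contDiff_A.differentiable (by simp))
      ![-∂[1] B 0, 0, 0] (fun i q => match i with
        | 0 => (h.A_x_eq q).trans (congrArg Neg.neg (hB_y q))
        | 1 => h.A_y_eq_zero q
        | 2 => h.A_z_eq_zero q) p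
    have hA₀ : A 0 = ∂[1] C 0 := by
      have := h.eq_yz_reduced 0
      simp only [Pi.zero_apply, zero_mul, sub_zero] at this
      linarith
    simp [Fin.sum_univ_three, hA₀] at hA
    linear_combination hA
  · have hB := eq_add_sum_of_partialDeriv_eq (h.contDiff_B.differentiable (by simp))
      ![0, ∂[1] B 0, 0] (fun i q => match i with
        | 0 => h.eq_xx q
        | 1 => hB_y q
        | 2 => h.B_z_eq_zero q) p
    simpa [Fin.sum_univ_three] using hB
  · have hC := eq_add_sum_of_partialDeriv_eq (h.contDiff_C.differentiable (by simp))
      ![0, ∂[1] C 0, 0] (fun i q => match i with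
        | 0 => h.C_x_eq_zero q
        | 1 => hC_y q
        | 2 => h.C_z_eq_zero q) p
    simpa [Fin.sum_univ_three] using hC

end IsLor3ConformalKillingSystem

/-- **Submaximally symmetric 3-dimensional Lorentzian conformal structure.**
For `g = dx dy + (dz − x dy)²` on `ℝ³`: the four listed fields are Killing,
linearly independent, and span the space of all smooth conformal Killing fields,
which is hence of dimension exactly `4`. -/
theorem lorentzian3_conformal_symmetry_dim :
    IsKillingOn Set.univ lor3Metric lor3X1 ∧
    IsKillingOn Set.univ lor3Metric lor3X2 ∧
    IsKillingOn Set.univ lor3Metric lor3X3 ∧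
    IsKillingOn Set.univ lor3Metric lor3X4 ∧
    LinearIndependent ℝ lor3Basis ∧
    ∀ Y : Vec 3 → Vec 3, IsConformalKillingOn Set.univ lor3Metric Y →
      ∃ c : Fin 4 → ℝ, Y = fun x => ∑ a, c a • lor3Basis a x := by
  refine ⟨isKillingOn_lor3X1, isKillingOn_lor3X2, isKillingOn_lor3X3, isKillingOn_lor3X4,
    linearIndependent_lor3Basis, fun Y hY => ?_⟩
  obtain ⟨β, γ, b₀, c₀, hY⟩ := hY.isLor3ConformalKillingSystem.exists_eq_affine
  refine ⟨![b₀, c₀, γ, -β], funext fun p => funext fun k => ?_⟩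
  obtain ⟨h0, h1, h2⟩ := hY p
  fin_cases k <;> simp [Fin.sum_univ_four, lor3Basis, lor3X1, lor3X2, lor3X3, lor3X4, h0, h1, h2,
    sub_eq_add_neg]
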